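/- Let x ∈ ℕ be even with x ≥ 2 and let G be the dense cycle graph for x. Then every odd node v_{i,j} has exactly one temporal path P_{i,j} from v_{i,j} to a node of the opposite bag B_{(i+x) mod 2x} and exactly one temporal path Q_{i,j} from v_{i,j} to a node of bag B_{(i+x+1) mod 2x}. Moreover, P_{i,j} passes through the bags B_i, B_{i+1}, …, B_{(i+x) mod 2x} consecutively in this order, Q_{i,j} passes through the bags B_i, B_{i−1}, …, B_{(i+x+1) mod 2x} consecutively in this order, and the edge sets of the paths P_{i,j}, taken over all odd nodes v_{i,j}, form a partition of the edge set E_G. -/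

import Mathlib

namespace TNCG

/-- A time edge: an undirected edge together with a time label. -/
abbrev TimeEdge (V : Type) := Sym2 V × ℕ

/-- A temporal host graph with terminals: the underlying graph is complete, every
(non-loop) edge carries a nonempty finite set of time labels, and there is a
nonempty set of terminal nodes. -/
structure HostGraph (V : Type) [Fintype V] [DecidableEq V] where
  labels : Sym2 V → Finset ℕ
  labels_nonempty : ∀ e : Sym2 V, ¬ e.IsDiag → (labels e).Nonempty
  labels_diag : ∀ e : Sym2 V, e.IsDiag → labels e = ∅
  terminals : Finset V
  terminals_nonempty : terminals.Nonempty

variable {V : Type} [Fintype V] [DecidableEq V]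

/-- Temporal reachability within a set `A` of time edges: `ReachFrom A t u w` holds if
there is a temporal walk from `u` to `w` all of whose labels are `≥ t` and non-decreasing. -/
inductive ReachFrom (A : Finset (TimeEdge V)) : ℕ → V → V → Prop
  | refl (t : ℕ) (v : V) : ReachFrom A t v v
  | step {t : ℕ} {u v w : V} (l : ℕ) (hle : t ≤ l) (he : (s(u, v), l) ∈ A)
      (htail : ReachFrom A l v w) : ReachFrom A t u w

/-- `u` reaches `w` via a temporal path in the time-edge set `A`. -/
def Reaches (A : Finset (TimeEdge V)) (u w : V) : Prop := ReachFrom A 0 u w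

/-- A strategy profile: each agent buys a finite set of time edges. -/
abbrev Profile (V : Type) := V → Finset (TimeEdge V)

/-- The set of time edges of the created graph `G(s)`. -/
def built (s : Profile V) : Finset (TimeEdge V) := Finset.univ.biUnion s

/-- The two edge-buying settings. -/
inductive Setting | loc | glob
deriving DecidableEq

/-- The two equilibrium types. -/
inductive EqType | nash | greedy
deriving DecidableEq

/-- A time edge of the host graph. -/
def HostGraph.ValidTimeEdge (H : HostGraph V) (p : TimeEdge V) : Prop :=
  p.2 ∈ H.labels p.1

/-- Which strategies are allowed for agent `v` in a given setting: in the local setting all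
bought time edges must be incident to `v`; in the global setting there is no restriction. -/
def Allowed (H : HostGraph V) : Setting → V → Finset (TimeEdge V) → Prop
  | Setting.loc, v, S => ∀ p ∈ S, H.ValidTimeEdge p ∧ v ∈ p.1
  | Setting.glob, _, S => ∀ p ∈ S, H.ValidTimeEdge p

open Classical in
/-- The cost of agent `v`: the number of bought time edges plus `C` times the number of
unreached terminals. -/
noncomputable def cost (H : HostGraph V) (C : ℝ) (s : Profile V) (v : V) : ℝ :=
  ((s v).card : ℝ) + C * ((H.terminals.filter fun t => ¬ Reaches (built s) v t).card : ℝ)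

/-- The profile obtained from `s` by replacing `v`'s strategy with `S'`. -/
def update (s : Profile V) (v : V) (S' : Finset (TimeEdge V)) : Profile V :=
  fun u => if u = v then S' else s u

/-- `S'` is obtained from `S` by adding or removing a single time edge. -/
def GreedyDev (S S' : Finset (TimeEdge V)) : Prop :=
  (∃ p, p ∉ S ∧ S' = insert p S) ∨ (∃ p ∈ S, S' = S.erase p)

/-- `s` is an equilibrium (Nash or Greedy) in the given setting: every strategy is allowed, and
no agent has an (allowed, and for Greedy Equilibria single-time-edge) improving response. -/
def IsEquilibrium (H : HostGraph V) (C : ℝ) (st : Setting) (et : EqType) (s : Profile V) :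
    Prop :=
  (∀ v, Allowed H st v (s v)) ∧
    ∀ v S', Allowed H st v S' → (et = EqType.greedy → GreedyDev (s v) S') →
      ¬ cost H C (update s v S') v < cost H C s v

/-- The social cost of a strategy profile. -/
noncomputable def socialCost (H : HostGraph V) (C : ℝ) (s : Profile V) : ℝ :=
  ∑ v, cost H C s v

/-- A social optimum: an allowed strategy profile of minimum social cost. -/
def IsSocialOptimum (H : HostGraph V) (C : ℝ) (st : Setting) (s : Profile V) : Prop :=
  (∀ v, Allowed H st v (s v)) ∧
    ∀ s' : Profile V, (∀ v, Allowed H st v (s' v)) → socialCost H C s ≤ socialCost H C s'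

/-- The lifetime of a host graph: its largest time label. -/
def HostGraph.maxLabel (H : HostGraph V) : ℕ :=
  Finset.univ.sup fun p : V × V => (H.labels s(p.1, p.2)).sup id

/-- The simple graph whose edges are the host edges carrying the maximum label. -/
def maxLabelGraph (H : HostGraph V) : SimpleGraph V where
  Adj u v := u ≠ v ∧ H.maxLabel ∈ H.labels s(u, v)
  symm := by
    constructor
    intro u v h
    exact ⟨Ne.symm h.1, by rw [Sym2.eq_swap]; exact h.2⟩
  loopless := ⟨fun v h => h.1 rfl⟩

/-- The simple graph underlying a set of time edges. -/
def edgesGraph (A : Finset (TimeEdge V)) : SimpleGraph V where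
  Adj u v := u ≠ v ∧ ∃ l, (s(u, v), l) ∈ A
  symm := by
    constructor
    rintro u v ⟨h, l, hl⟩
    exact ⟨Ne.symm h, l, by rw [Sym2.eq_swap]; exact hl⟩
  loopless := ⟨fun v h => h.1 rfl⟩

/-- A terminal spanner: a valid time-edge set in which every node reaches every terminal. -/
def IsTerminalSpanner (H : HostGraph V) (A : Finset (TimeEdge V)) : Prop :=
  (∀ p ∈ A, H.ValidTimeEdge p) ∧ ∀ v : V, ∀ t ∈ H.terminals, Reaches A v t

/-- An inclusion minimal terminal spanner. -/
def IsMinimalTerminalSpanner (H : HostGraph V) (A : Finset (TimeEdge V)) : Prop :=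
  IsTerminalSpanner H A ∧ ∀ p ∈ A, ¬ IsTerminalSpanner H (A.erase p)

/-- A host graph is simple if every (non-loop) edge carries exactly one time label. -/
def HostGraph.Simple (H : HostGraph V) : Prop :=
  ∀ e : Sym2 V, ¬ e.IsDiag → (H.labels e).card = 1


section DenseCycle

/-- A node of the dense cycle graph for `x`: a bag index in `Fin (2x)`, an index in
`Fin (x/2)`, and a parity (`false` for the odd nodes `v_{i,j}`, `true` for the even nodes
`v'_{i,j}`). -/
abbrev DCNode (x : ℕ) := Fin (2 * x) × Fin (x / 2) × Bool

/-- The (oriented) edges of the dense cycle graph from bag `i` to bag `i+1`, with their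
labels: `{v_{i,j}, v'_{i+1,k}}` carries label `(2(k−j) mod x) + 1` and `{v'_{i,j}, v_{i+1,k}}`
carries label `((2(k−j)+1) mod x) + 1`. -/
def dcForward (x : ℕ) (a b : DCNode x) (l : ℕ) : Prop :=
  (b.1 : ℕ) = ((a.1 : ℕ) + 1) % (2 * x) ∧ b.2.2 = !a.2.2 ∧
    l = if a.2.2 = false
        then (2 * (b.2.1 : ℕ) + x - 2 * (a.2.1 : ℕ)) % x + 1
        else (2 * (b.2.1 : ℕ) + x - 2 * (a.2.1 : ℕ) + 1) % x + 1

/-- The (symmetric) labeled adjacency of the dense cycle graph for `x`. -/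
def DCAdj (x : ℕ) (a b : DCNode x) (l : ℕ) : Prop :=
  dcForward x a b l ∨ dcForward x b a l

/-- The edge set of the dense cycle graph for `x`. -/
def dcEdges (x : ℕ) : Set (Sym2 (DCNode x)) :=
  {e | ∃ a b l, e = s(a, b) ∧ dcForward x a b l}

/-- A temporal path w.r.t. a labeled adjacency `adj`: a list of pairwise distinct nodes
together with a non-decreasing list of labels for its consecutive edges. -/
def IsTempPath {W : Type} (adj : W → W → ℕ → Prop) (vs : List W) (ls : List ℕ) : Prop :=
  vs.Nodup ∧ vs.length = ls.length + 1 ∧ ls.Chain' (· ≤ ·) ∧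
    ∀ (i : ℕ) (hi : i + 1 < vs.length) (hi' : i < ls.length),
      adj (vs.get ⟨i, by omega⟩) (vs.get ⟨i + 1, hi⟩) (ls.get ⟨i, hi'⟩)

/-- The set of (undirected) edges used by a path, given as its list of nodes. -/
def pathEdges {W : Type} (vs : List W) : Set (Sym2 W) :=
  {e | ∃ (i : ℕ) (h : i + 1 < vs.length), e = s(vs.get ⟨i, by omega⟩, vs.get ⟨i + 1, h⟩)}

section DCAux

/-- Index offset along the forward path `P`. -/
def fP : ℕ → ℕ
  | 0 => 0
  | k + 1 => fP k + k / 2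

/-- Index offset along the backward path `Q`. -/
def gQ : ℕ → ℕ
  | 0 => 0
  | k + 1 => gQ k + (k + 1) / 2

lemma fP_le (k : ℕ) : fP k ≤ k * k := by
  induction k with
  | zero => simp [fP]
  | succ n ih => simp only [fP]; nlinarith [Nat.div_le_self n 2]

lemma gQ_le (k : ℕ) : gQ k ≤ k * k := by
  induction k with
  | zero => simp [gQ]
  | succ n ih => simp only [gQ]; nlinarith [Nat.div_le_self (n+1) 2]

lemma mod2h (h n : ℕ) (hh : 0 < h) (hn : n < 2 * h) :
    n % h = if n < h then n else n - h := by
  split_ifs with hlt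
  · exact Nat.mod_eq_of_lt hlt
  · rw [Nat.mod_eq_sub_mod (by omega)]
    exact Nat.mod_eq_of_lt (by omega)

lemma keymod (h a b t : ℕ) (hh : 0 < h) (ha : a < h) (hb : b < h) (ht : t < h) :
    (b + h - a) % h = t ↔ b = (a + t) % h := by
  rw [mod2h h _ hh (by omega), mod2h h _ hh (by omega)]
  split_ifs <;> omega

lemma two_mul_mod (h y : ℕ) : (2 * y) % (2 * h) = 2 * (y % h) :=
  Nat.mul_mod_mul_left 2 y h

lemma two_mul_add_one_mod (h y : ℕ) (hh : 0 < h) :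
    (2 * y + 1) % (2 * h) = 2 * (y % h) + 1 := by
  have h1 := Nat.div_add_mod y h
  have h2 : (2*h)*(y/h) = 2*(h*(y/h)) := by ring
  conv_lhs => rw [show 2*y+1 = (2*h)*(y/h) + (2*(y%h)+1) by omega]
  rw [Nat.mul_add_mod]
  exact Nat.mod_eq_of_lt (by have := Nat.mod_lt y hh; omega)

lemma lab_even (h a b t : ℕ) (hh : 0 < h) (ha : a < h) (hb : b < h) (ht : t < h) :
    (2*b + 2*h - 2*a) % (2*h) = 2*t ↔ b = (a + t) % h := by
  rw [show 2*b + 2*h - 2*a = 2*(b + h - a) by omega, two_mul_mod,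
    ← keymod h a b t hh ha hb ht]
  omega

lemma lab_odd (h a b t : ℕ) (hh : 0 < h) (ha : a < h) (hb : b < h) (ht : t < h) :
    (2*b + 2*h - 2*a + 1) % (2*h) = 2*t + 1 ↔ b = (a + t) % h := by
  rw [show 2*b + 2*h - 2*a + 1 = 2*(b + h - a) + 1 by omega,
    two_mul_add_one_mod h _ hh, ← keymod h a b t hh ha hb ht]
  omega

lemma lab_even' (x h a b t : ℕ) (hx : x = 2*h) (hh : 0 < h) (ha : a < h)
    (hb : b < h) (ht : t < h) :
    (2*b + x - 2*a) % x = 2*t ↔ b = (a + t) % h := by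
  subst hx; exact lab_even h a b t hh ha hb ht

lemma lab_odd' (x h a b t : ℕ) (hx : x = 2*h) (hh : 0 < h) (ha : a < h)
    (hb : b < h) (ht : t < h) :
    (2*b + x - 2*a + 1) % x = 2*t + 1 ↔ b = (a + t) % h := by
  subst hx; exact lab_odd h a b t hh ha hb ht

lemma lab_even_parity (x h a b : ℕ) (hx : x = 2*h) :
    ((2*b + x - 2*a) % x) % 2 = 0 := by
  subst hx
  rw [show 2*b + 2*h - 2*a = 2*(b + h - a) by omega, two_mul_mod]
  omega

lemma lab_odd_parity (x h a b : ℕ) (hx : x = 2*h) (hh : 0 < h) :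
    ((2*b + x - 2*a + 1) % x) % 2 = 1 := by
  subst hx
  rw [show 2*b + 2*h - 2*a + 1 = 2*(b + h - a) + 1 by omega,
    two_mul_add_one_mod h _ hh]
  omega

lemma sub_mod_inj_b (h a b b' : ℕ) (hh : 0 < h) (ha : a < h) (hb : b < h)
    (hb' : b' < h) (heq : (b + h - a) % h = (b' + h - a) % h) : b = b' := by
  rw [mod2h h _ hh (by omega), mod2h h _ hh (by omega)] at heq
  split_ifs at heq <;> omega

lemma sub_mod_inj_a (h a a' b : ℕ) (hh : 0 < h) (ha : a < h) (ha' : a' < h)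
    (hb : b < h) (heq : (b + h - a) % h = (b + h - a') % h) : a = a' := by
  rw [mod2h h _ hh (by omega), mod2h h _ hh (by omega)] at heq
  split_ifs at heq <;> omega

lemma cancel_even_b (x h a b b' : ℕ) (hx : x = 2*h) (hh : 0 < h) (ha : a < h)
    (hb : b < h) (hb' : b' < h)
    (hE : (2*b + x - 2*a) % x = (2*b' + x - 2*a) % x) : b = b' := by
  subst hx
  have e1 : (2*b + 2*h - 2*a) % (2*h) = 2*((b+h-a)%h) := by
    rw [show 2*b+2*h-2*a = 2*(b+h-a) by omega, two_mul_mod]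
  have e2 : (2*b' + 2*h - 2*a) % (2*h) = 2*((b'+h-a)%h) := by
    rw [show 2*b'+2*h-2*a = 2*(b'+h-a) by omega, two_mul_mod]
  exact sub_mod_inj_b h a b b' hh ha hb hb' (by omega)

lemma cancel_odd_b (x h a b b' : ℕ) (hx : x = 2*h) (hh : 0 < h) (ha : a < h)
    (hb : b < h) (hb' : b' < h)
    (hE : (2*b + x - 2*a + 1) % x = (2*b' + x - 2*a + 1) % x) : b = b' := by
  subst hx
  have e1 : (2*b + 2*h - 2*a + 1) % (2*h) = 2*((b+h-a)%h) + 1 := by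
    rw [show 2*b+2*h-2*a+1 = 2*(b+h-a)+1 by omega, two_mul_add_one_mod h _ hh]
  have e2 : (2*b' + 2*h - 2*a + 1) % (2*h) = 2*((b'+h-a)%h) + 1 := by
    rw [show 2*b'+2*h-2*a+1 = 2*(b'+h-a)+1 by omega, two_mul_add_one_mod h _ hh]
  exact sub_mod_inj_b h a b b' hh ha hb hb' (by omega)

lemma cancel_even_a (x h a a' b : ℕ) (hx : x = 2*h) (hh : 0 < h) (ha : a < h)
    (ha' : a' < h) (hb : b < h)
    (hE : (2*b + x - 2*a) % x = (2*b + x - 2*a') % x) : a = a' := by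
  subst hx
  have e1 : (2*b + 2*h - 2*a) % (2*h) = 2*((b+h-a)%h) := by
    rw [show 2*b+2*h-2*a = 2*(b+h-a) by omega, two_mul_mod]
  have e2 : (2*b + 2*h - 2*a') % (2*h) = 2*((b+h-a')%h) := by
    rw [show 2*b+2*h-2*a' = 2*(b+h-a') by omega, two_mul_mod]
  exact sub_mod_inj_a h a a' b hh ha ha' hb (by omega)

lemma cancel_odd_a (x h a a' b : ℕ) (hx : x = 2*h) (hh : 0 < h) (ha : a < h)
    (ha' : a' < h) (hb : b < h)
    (hE : (2*b + x - 2*a + 1) % x = (2*b + x - 2*a' + 1) % x) : a = a' := by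
  subst hx
  have e1 : (2*b + 2*h - 2*a + 1) % (2*h) = 2*((b+h-a)%h) + 1 := by
    rw [show 2*b+2*h-2*a+1 = 2*(b+h-a)+1 by omega, two_mul_add_one_mod h _ hh]
  have e2 : (2*b + 2*h - 2*a' + 1) % (2*h) = 2*((b+h-a')%h) + 1 := by
    rw [show 2*b+2*h-2*a'+1 = 2*(b+h-a')+1 by omega, two_mul_add_one_mod h _ hh]
  exact sub_mod_inj_a h a a' b hh ha ha' hb (by omega)

lemma parity_succ (k : ℕ) : decide ((k+1) % 2 = 1) = !decide (k % 2 = 1) := by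
  have := Nat.mod_two_eq_zero_or_one k
  rcases this with h | h <;> simp [Nat.add_mod, h]

variable {x h : ℕ}

/-- Label parity determines the parity of the source node. -/
lemma dc_label_parity (hx : x = 2*h) (hh : 0 < h) {a b : DCNode x} {l : ℕ}
    (hf : dcForward x a b l) : l % 2 = if a.2.2 then 0 else 1 := by
  obtain ⟨-, -, hl⟩ := hf
  cases hab : a.2.2
  · rw [hab] at hl; simp only [reduceIte] at hl
    have := lab_even_parity x h (a.2.1 : ℕ) (b.2.1 : ℕ) hx
    simp only [Bool.false_eq_true, reduceIte]
    omega
  · rw [hab] at hl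
    simp only [Bool.true_eq_false, reduceIte] at hl
    have := lab_odd_parity x h (a.2.1 : ℕ) (b.2.1 : ℕ) hx hh
    simp only [reduceIte]
    omega

lemma dc_label_bound (hx : x = 2*h) (hh : 0 < h) {a b : DCNode x} {l : ℕ}
    (hf : dcForward x a b l) : 1 ≤ l ∧ l ≤ x := by
  obtain ⟨-, -, hl⟩ := hf
  have h1 : (2 * (b.2.1:ℕ) + x - 2 * (a.2.1:ℕ)) % x < x := Nat.mod_lt _ (by omega)
  have h2 : (2 * (b.2.1:ℕ) + x - 2 * (a.2.1:ℕ) + 1) % x < x := Nat.mod_lt _ (by omega)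
  split_ifs at hl <;> omega

lemma dc_not_both (hx2 : 2 ≤ x) {a b : DCNode x} {l l' : ℕ}
    (hf : dcForward x a b l) (hg : dcForward x b a l') : False := by
  have h1 := hf.1
  have h2 := hg.1
  rw [h1, Nat.mod_add_mod] at h2
  have hlt : (a.1 : ℕ) < 2*x := a.1.isLt
  rw [mod2h (2*x) _ (by omega) (by omega)] at h2
  split_ifs at h2 <;> omega

lemma dc_fwd_det (hx : x = 2*h) (hh : 0 < h) {a b b' : DCNode x} {l : ℕ}
    (hf : dcForward x a b l) (hg : dcForward x a b' l) : b = b' := by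
  obtain ⟨hf1, hf2, hf3⟩ := hf
  obtain ⟨hg1, hg2, hg3⟩ := hg
  have hb2 : (b.2.1 : ℕ) < h := by have := b.2.1.isLt; omega
  have hb2' : (b'.2.1 : ℕ) < h := by have := b'.2.1.isLt; omega
  have ha2 : (a.2.1 : ℕ) < h := by have := a.2.1.isLt; omega
  have hidx : (b.2.1 : ℕ) = (b'.2.1 : ℕ) := by
    rw [hg3] at hf3
    split_ifs at hf3
    · exact (cancel_even_b x h _ _ _ hx hh ha2 hb2' hb2 (by omega)).symm
    · exact (cancel_odd_b x h _ _ _ hx hh ha2 hb2' hb2 (by omega)).symm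
  refine Prod.ext (Fin.ext ?_) (Prod.ext (Fin.ext hidx) ?_)
  · rw [hf1, hg1]
  · rw [hf2, hg2]

lemma dc_bwd_det (hx : x = 2*h) (hh : 0 < h) {a a' b : DCNode x} {l : ℕ}
    (hf : dcForward x a b l) (hg : dcForward x a' b l) : a = a' := by
  obtain ⟨hf1, hf2, hf3⟩ := hf
  obtain ⟨hg1, hg2, hg3⟩ := hg
  have ha2 : (a.2.1 : ℕ) < h := by have := a.2.1.isLt; omega
  have ha2' : (a'.2.1 : ℕ) < h := by have := a'.2.1.isLt; omega
  have hb2 : (b.2.1 : ℕ) < h := by have := b.2.1.isLt; omega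
  have hbag : (a.1 : ℕ) = (a'.1 : ℕ) := by
    rw [hf1] at hg1
    have h1 : (a.1 : ℕ) < 2*x := a.1.isLt
    have h2 : (a'.1 : ℕ) < 2*x := a'.1.isLt
    rw [mod2h (2*x) _ (by omega) (by omega), mod2h (2*x) _ (by omega) (by omega)] at hg1
    split_ifs at hg1 <;> omega
  have hpar : a.2.2 = a'.2.2 := by
    rw [hf2] at hg2
    cases hA : a.2.2 <;> cases hA' : a'.2.2 <;> rw [hA, hA'] at hg2 <;>
      simp_all
  have hidx : (a.2.1 : ℕ) = (a'.2.1 : ℕ) := by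
    rw [hg3, ← hpar] at hf3
    split_ifs at hf3
    · exact cancel_even_a x h _ _ _ hx hh ha2 ha2' hb2 (by omega)
    · exact cancel_odd_a x h _ _ _ hx hh ha2 ha2' hb2 (by omega)
  exact Prod.ext (Fin.ext hbag) (Prod.ext (Fin.ext hidx) hpar)

/-- The `idx`-th node of the forward path `P i j`. -/
def pN (x : ℕ) (hx2 : 2 ≤ x) (i j idx : ℕ) : DCNode x :=
  (⟨(i + idx) % (2*x), Nat.mod_lt _ (by omega)⟩,
   ⟨(j + fP idx) % (x/2), Nat.mod_lt _ (by omega)⟩,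
   decide (idx % 2 = 1))

/-- The `idx`-th node of the backward path `Q i j`. -/
def qN (x : ℕ) (hx2 : 2 ≤ x) (i j idx : ℕ) : DCNode x :=
  (⟨(i + (2*x - idx)) % (2*x), Nat.mod_lt _ (by omega)⟩,
   ⟨(j + x*x*(x/2) - gQ idx) % (x/2), Nat.mod_lt _ (by omega)⟩,
   decide (idx % 2 = 1))

lemma pN_adj (hx : x = 2*h) (hh : 0 < h) (hx2 : 2 ≤ x) (i j k : ℕ) (hk : k < x) :
    dcForward x (pN x hx2 i j k) (pN x hx2 i j (k+1)) (k+1) := by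
  have hd2 : x / 2 = h := by omega
  refine ⟨?_, ?_, ?_⟩
  · show (i + (k+1)) % (2*x) = ((i + k) % (2*x) + 1) % (2*x)
    rw [Nat.mod_add_mod, Nat.add_assoc]
  · exact parity_succ k
  · show k + 1 = _
    simp only [pN, hd2]
    have ha2 : (j + fP k) % h < h := Nat.mod_lt _ hh
    have hb2 : (j + fP (k+1)) % h < h := Nat.mod_lt _ hh
    have hstep : fP (k+1) = fP k + k / 2 := rfl
    rcases Nat.even_or_odd k with ⟨t, ht⟩ | ⟨t, ht⟩
    · have hpar : decide (k % 2 = 1) = false := by simp; omega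
      rw [hpar]
      simp only [Bool.false_eq_true, if_true, reduceIte]
      have ht' : t < h := by omega
      have : (2 * ((j + fP (k+1)) % h) + x - 2 * ((j + fP k) % h)) % x = 2*t := by
        refine (lab_even' x h _ _ t hx hh ha2 hb2 ht').mpr ?_
        rw [Nat.mod_add_mod]
        congr 1; omega
      omega
    · have hpar : decide (k % 2 = 1) = true := by simp; omega
      rw [hpar]
      simp only [reduceIte, Bool.true_eq_false]
      have ht' : t < h := by omega
      have : (2 * ((j + fP (k+1)) % h) + x - 2 * ((j + fP k) % h) + 1) % x = 2*t + 1 := by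
        refine (lab_odd' x h _ _ t hx hh ha2 hb2 ht').mpr ?_
        rw [Nat.mod_add_mod]
        congr 1; omega
      omega

lemma qN_adj (hx : x = 2*h) (hh : 0 < h) (hx2 : 2 ≤ x) (i j k : ℕ) (hk : k < x - 1) :
    dcForward x (qN x hx2 i j (k+1)) (qN x hx2 i j k) (k+2) := by
  have hd2 : x / 2 = h := by omega
  have hkx : k ≤ x := by omega
  have hkx1 : k + 1 ≤ x := by omega
  have hBk : gQ k ≤ x*x*h := le_trans (gQ_le k) (le_trans (Nat.mul_le_mul hkx hkx)
    (Nat.le_mul_of_pos_right _ (by omega)))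
  have hBk1 : gQ (k+1) ≤ x*x*h := le_trans (gQ_le (k+1))
    (le_trans (Nat.mul_le_mul hkx1 hkx1) (Nat.le_mul_of_pos_right _ (by omega)))
  refine ⟨?_, ?_, ?_⟩
  · show (i + (2*x - k)) % (2*x) = ((i + (2*x - (k+1))) % (2*x) + 1) % (2*x)
    rw [Nat.mod_add_mod]; congr 1; omega
  · show decide (k % 2 = 1) = !decide ((k+1) % 2 = 1)
    rw [parity_succ k, Bool.not_not]
  · show k + 2 = _
    simp only [qN, hd2]
    set B := x*x*h with hB
    have ha2 : (j + B - gQ (k+1)) % h < h := Nat.mod_lt _ hh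
    have hb2 : (j + B - gQ k) % h < h := Nat.mod_lt _ hh
    have hstep : gQ (k+1) = gQ k + (k+1) / 2 := rfl
    rcases Nat.even_or_odd k with ⟨t, ht⟩ | ⟨t, ht⟩
    · have hpar : decide ((k+1) % 2 = 1) = true := by simp; omega
      rw [hpar]
      simp only [reduceIte, Bool.true_eq_false]
      have ht' : t < h := by omega
      have : (2 * ((j + B - gQ k) % h) + x - 2 * ((j + B - gQ (k+1)) % h) + 1) % x
          = 2*t + 1 := by
        refine (lab_odd' x h _ _ t hx hh ha2 hb2 ht').mpr ?_
        rw [Nat.mod_add_mod]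
        congr 1; omega
      omega
    · have hpar : decide ((k+1) % 2 = 1) = false := by simp; omega
      rw [hpar]
      simp only [Bool.false_eq_true, reduceIte]
      have ht' : t + 1 < h := by omega
      have : (2 * ((j + B - gQ k) % h) + x - 2 * ((j + B - gQ (k+1)) % h)) % x
          = 2*(t+1) := by
        refine (lab_even' x h _ _ (t+1) hx hh ha2 hb2 ht').mpr ?_
        rw [Nat.mod_add_mod]
        congr 1; omega
      omega


lemma modeq_bounded (M a b : ℕ) (ha : a < M) (hb : b < M) (h : a ≡ b [MOD M]) :
    a = b := by
  rwa [Nat.ModEq, Nat.mod_eq_of_lt ha, Nat.mod_eq_of_lt hb] at h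

/-- The node list of the path `P i j`. -/
def pNodes (x : ℕ) (hx2 : 2 ≤ x) (i j : ℕ) : List (DCNode x) :=
  (List.range (x+1)).map (pN x hx2 i j)

/-- The label list of the path `P i j`. -/
def pLabels (x : ℕ) : List ℕ := (List.range x).map (· + 1)

/-- The node list of the path `Q i j`. -/
def qNodes (x : ℕ) (hx2 : 2 ≤ x) (i j : ℕ) : List (DCNode x) :=
  (List.range x).map (qN x hx2 i j)

/-- The label list of the path `Q i j`. -/
def qLabels (x : ℕ) : List ℕ := (List.range (x-1)).map (· + 2)

lemma pNodes_length (hx2 : 2 ≤ x) (i j : ℕ) :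
    (pNodes x hx2 i j).length = x + 1 := by simp [pNodes]

lemma qNodes_length (hx2 : 2 ≤ x) (i j : ℕ) :
    (qNodes x hx2 i j).length = x := by simp [qNodes]

lemma pNodes_getElem (hx2 : 2 ≤ x) (i j k : ℕ) (hk : k < (pNodes x hx2 i j).length) :
    (pNodes x hx2 i j)[k] = pN x hx2 i j k := by
  simp [pNodes]

lemma qNodes_getElem (hx2 : 2 ≤ x) (i j k : ℕ) (hk : k < (qNodes x hx2 i j).length) :
    (qNodes x hx2 i j)[k] = qN x hx2 i j k := by
  simp [qNodes]

lemma pLabels_getElem (k : ℕ) (hk : k < (pLabels x).length) :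
    (pLabels x)[k] = k + 1 := by simp [pLabels]

lemma qLabels_getElem (k : ℕ) (hk : k < (qLabels x).length) :
    (qLabels x)[k] = k + 2 := by simp [qLabels]

lemma pNodes_nodup (hx2 : 2 ≤ x) (i j : ℕ) : (pNodes x hx2 i j).Nodup := by
  refine List.Nodup.map_on ?_ List.nodup_range
  intro k hk k' hk' heq
  rw [List.mem_range] at hk hk'
  have hbag : (i+k) % (2*x) = (i+k') % (2*x) :=
    congrArg (fun v : DCNode x => (v.1 : ℕ)) heq
  have hc : k ≡ k' [MOD 2*x] := Nat.ModEq.add_left_cancel' i hbag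
  exact modeq_bounded (2*x) k k' (by omega) (by omega) hc

lemma qNodes_nodup (hx2 : 2 ≤ x) (i j : ℕ) : (qNodes x hx2 i j).Nodup := by
  refine List.Nodup.map_on ?_ List.nodup_range
  intro k hk k' hk' heq
  rw [List.mem_range] at hk hk'
  have hbag : (i+(2*x-k)) % (2*x) = (i+(2*x-k')) % (2*x) :=
    congrArg (fun v : DCNode x => (v.1 : ℕ)) heq
  have hc : 2*x-k ≡ 2*x-k' [MOD 2*x] := Nat.ModEq.add_left_cancel' i hbag
  rw [Nat.ModEq, mod2h (2*x) _ (by omega) (by omega),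
    mod2h (2*x) _ (by omega) (by omega)] at hc
  split_ifs at hc <;> omega

lemma pPath_tp (hx : x = 2*h) (hh : 0 < h) (hx2 : 2 ≤ x) (i j : ℕ) :
    IsTempPath (DCAdj x) (pNodes x hx2 i j) (pLabels x) := by
  refine ⟨pNodes_nodup hx2 i j, by simp [pNodes, pLabels], ?_, ?_⟩
  · refine List.isChain_iff_getElem.mpr ?_
    intro k hk
    rw [pLabels_getElem k (by omega), pLabels_getElem (k+1) (by omega)]
    omega
  · intro k hk hk'
    have hkx : k < x := by simpa [pLabels] using hk'
    simp only [List.get_eq_getElem]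
    rw [pNodes_getElem hx2 i j k (by omega), pNodes_getElem hx2 i j (k+1) (by omega),
      pLabels_getElem k (by simpa [pLabels] using hk')]
    exact Or.inl (pN_adj hx hh hx2 i j k hkx)

lemma qPath_tp (hx : x = 2*h) (hh : 0 < h) (hx2 : 2 ≤ x) (i j : ℕ) :
    IsTempPath (DCAdj x) (qNodes x hx2 i j) (qLabels x) := by
  refine ⟨qNodes_nodup hx2 i j, by simp [qNodes, qLabels]; omega, ?_, ?_⟩
  · refine List.isChain_iff_getElem.mpr ?_
    intro k hk
    rw [qLabels_getElem k (by omega), qLabels_getElem (k+1) (by omega)]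
    omega
  · intro k hk hk'
    have hkx : k < x - 1 := by simpa [qLabels] using hk'
    simp only [List.get_eq_getElem]
    rw [qNodes_getElem hx2 i j k (by omega), qNodes_getElem hx2 i j (k+1) (by omega),
      qLabels_getElem k (by simpa [qLabels] using hk')]
    exact Or.inr (qN_adj hx hh hx2 i j k hkx)

lemma pN_zero (hx2 : 2 ≤ x) (i j : ℕ) (hi : i < 2*x) (hj : j < x/2) :
    pN x hx2 i j 0 = (⟨i, hi⟩, ⟨j, hj⟩, false) := by
  unfold pN
  refine Prod.ext (Fin.ext ?_) (Prod.ext (Fin.ext ?_) ?_)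
  · show (i + 0) % (2*x) = i
    rw [Nat.add_zero]; exact Nat.mod_eq_of_lt hi
  · show (j + fP 0) % (x/2) = j
    show (j + 0) % (x/2) = j
    rw [Nat.add_zero]; exact Nat.mod_eq_of_lt hj
  · rfl

lemma qN_zero (hx2 : 2 ≤ x) (i j : ℕ) (hi : i < 2*x) (hj : j < x/2) :
    qN x hx2 i j 0 = (⟨i, hi⟩, ⟨j, hj⟩, false) := by
  unfold qN
  refine Prod.ext (Fin.ext ?_) (Prod.ext (Fin.ext ?_) ?_)
  · show (i + (2*x - 0)) % (2*x) = i
    rw [Nat.sub_zero, Nat.add_mod_right]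
    exact Nat.mod_eq_of_lt hi
  · show (j + x*x*(x/2) - gQ 0) % (x/2) = j
    show (j + x*x*(x/2) - 0) % (x/2) = j
    rw [Nat.sub_zero, Nat.add_mul_mod_self_right]
    exact Nat.mod_eq_of_lt hj
  · rfl


lemma dvd_cases (n d : ℤ) (hn : 0 < n) (hd : n ∣ d) (h1 : 0 ≤ d) (h2 : d ≤ 2*n) :
    d = 0 ∨ d = n ∨ d = 2*n := by
  obtain ⟨c, rfl⟩ := hd
  have hc0 : 0 ≤ c := by nlinarith
  have hc2 : c ≤ 2 := by nlinarith
  interval_cases c <;> omega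

/-- Labels along a temporal path are strictly increasing. -/
lemma tp_strict (hx : x = 2*h) (hh : 0 < h) (hx2 : 2 ≤ x) {vs : List (DCNode x)}
    {ls : List ℕ} (hT : IsTempPath (DCAdj x) vs ls) :
    ∀ k, (hk : k + 1 < ls.length) →
      ls[k]'(by omega) < ls[k+1]'(by omega) := by
  obtain ⟨hnd, hlen, hch, hadj⟩ := hT
  intro k hk1
  have hle : ls[k]'(by omega) ≤ ls[k+1]'(by omega) := by
    have := List.isChain_iff_getElem.mp hch k (by omega)
    simpa using this
  rcases eq_or_lt_of_le hle with heq | hlt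
  · exfalso
    have ha1 := hadj k (by omega) (by omega)
    have ha2 := hadj (k+1) (by omega) (by omega)
    simp only [List.get_eq_getElem] at ha1 ha2
    rw [← heq] at ha2
    have hinj : ∀ (m m' : ℕ) (hm : m < vs.length) (hm' : m' < vs.length),
        vs[m] = vs[m'] → m = m' := by
      intro m m' hm hm' he
      have h2 : (⟨m, hm⟩ : Fin vs.length) = ⟨m', hm'⟩ :=
        List.nodup_iff_injective_get.mp hnd (by simpa using he)
      simpa using h2
    rcases ha1 with hf1 | hf1 <;> rcases ha2 with hf2 | hf2
    · have p1 := dc_label_parity hx hh hf1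
      have p2 := dc_label_parity hx hh hf2
      have hp : (vs[k+1]'(by omega)).2.2 = !(vs[k]'(by omega)).2.2 := hf1.2.1
      rw [hp] at p2
      cases hB : (vs[k]'(by omega)).2.2 <;> rw [hB] at p1 p2 <;>
        simp at p1 p2 <;> omega
    · have he := dc_bwd_det hx hh hf1 hf2
      have := hinj k (k+2) (by omega) (by omega) he
      omega
    · have he := dc_fwd_det hx hh hf1 hf2
      have := hinj k (k+2) (by omega) (by omega) he
      omega
    · have p1 := dc_label_parity hx hh hf1
      have p2 := dc_label_parity hx hh hf2
      have hp : (vs[k+1]'(by omega)).2.2 = !(vs[k+2]'(by omega)).2.2 := hf2.2.1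
      rw [hp] at p1
      cases hB : (vs[k+2]'(by omega)).2.2 <;> rw [hB] at p1 p2 <;>
        simp at p1 p2 <;> omega
  · exact hlt

lemma strict_mono_ls {ls : List ℕ}
    (hs : ∀ k, (hk : k + 1 < ls.length) → ls[k]'(by omega) < ls[k+1]'(by omega)) :
    ∀ d k, (hk : k + d < ls.length) → ls[k]'(by omega) + d ≤ ls[k+d]'(by omega) := by
  intro d
  induction d with
  | zero => intro k hk; simp
  | succ n ih =>
    intro k hk
    have h1 := ih k (by omega)
    have h2 := hs (k+n) (by omega)
    have : k + (n+1) = (k+n) + 1 := by omega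
    simp only [this]
    omega


lemma bwd_first_even (hx : x = 2*h) (hh : 0 < h) {a b : DCNode x} {l : ℕ}
    (hf : dcForward x a b l) (hpar : b.2.2 = false) : l % 2 = 0 := by
  have hp := dc_label_parity hx hh hf
  have h2 := hf.2.1
  rw [hpar] at h2
  cases hA : a.2.2
  · rw [hA] at h2; simp at h2
  · rw [hA] at hp; simpa using hp

set_option maxHeartbeats 2000000 in
lemma p_unique (hx : x = 2*h) (hh : 0 < h) (hx2 : 2 ≤ x) (i j : ℕ) (hi : i < 2*x)
    (hj : j < x/2) {vs : List (DCNode x)} {ls : List ℕ}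
    (hT : IsTempPath (DCAdj x) vs ls)
    (hhead : vs.head? = some (⟨i, hi⟩, ⟨j, hj⟩, false))
    (hlast : ∃ w : DCNode x, vs.getLast? = some w ∧ (w.1 : ℕ) = (i + x) % (2*x)) :
    vs = pNodes x hx2 i j ∧ ls = pLabels x := by
  have hstrict := tp_strict hx hh hx2 hT
  obtain ⟨hnd, hlen, hch, hadj⟩ := hT
  have hmono := strict_mono_ls hstrict
  have hvs0 : vs[0]'(by omega) = (⟨i, hi⟩, ⟨j, hj⟩, false) := by
    rw [List.head?_eq_getElem?, List.getElem?_eq_getElem (by omega)] at hhead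
    exact Option.some.inj hhead
  obtain ⟨w, hw1, hw2⟩ := hlast
  have hwL : vs[ls.length]'(by omega) = w := by
    rw [List.getLast?_eq_getElem?, hlen, Nat.add_sub_cancel,
      List.getElem?_eq_getElem (by omega)] at hw1
    exact Option.some.inj hw1
  have hadj' : ∀ m, (hm : m < ls.length) →
      DCAdj x (vs[m]'(by omega)) (vs[m+1]'(by omega)) (ls[m]'hm) := by
    intro m hm
    have := hadj m (by omega) hm
    simpa using this
  have hbound : ∀ m, (hm : m < ls.length) → 1 ≤ ls[m]'hm ∧ ls[m]'hm ≤ x := by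
    intro m hm
    rcases hadj' m hm with hf | hf
    exacts [dc_label_bound hx hh hf, dc_label_bound hx hh hf]
  have hLx : ls.length ≤ x := by
    by_contra hc
    push_neg at hc
    have h1 := hmono (ls.length - 1) 0 (by omega)
    simp only [Nat.zero_add] at h1
    have h2 := (hbound 0 (by omega)).1
    have h3 := (hbound (ls.length - 1) (by omega)).2
    omega
  have hdisp : ∀ k, (hk : k ≤ ls.length) → ∃ f b : ℕ, f + b = k ∧
      (((vs[k]'(by omega)).1.val : ℕ) : ZMod (2*x)) = (i : ZMod (2*x)) + f - b ∧
      (b = 0 → ∀ m, (hm : m < k) → dcForward x (vs[m]'(by omega)) (vs[m+1]'(by omega))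
        (ls[m]'(by omega))) ∧
      (f = 0 → ∀ m, (hm : m < k) → dcForward x (vs[m+1]'(by omega)) (vs[m]'(by omega))
        (ls[m]'(by omega))) := by
    intro k
    induction k with
    | zero =>
      intro _
      refine ⟨0, 0, rfl, ?_, fun _ m hm => absurd hm (by omega),
        fun _ m hm => absurd hm (by omega)⟩
      rw [hvs0]
      push_cast
      ring
    | succ n ih =>
      intro hk
      obtain ⟨f, b, hfb, hcast, hbf, hff⟩ := ih (by omega)
      rcases hadj' n (by omega) with hf1 | hf1
      · refine ⟨f+1, b, by omega, ?_, ?_, fun h0 => absurd h0 (by omega)⟩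
        · have hb1 : ((vs[n+1]'(by omega)).1.val : ℕ) =
              ((vs[n]'(by omega)).1.val + 1) % (2*x) := hf1.1
          rw [hb1, ZMod.natCast_mod]
          push_cast
          linear_combination hcast
        · intro hb0 m hm
          rcases Nat.lt_or_ge m n with hmn | hmn
          · exact hbf hb0 m hmn
          · have hmeq : m = n := by omega
            subst hmeq
            exact hf1
      · refine ⟨f, b+1, by omega, ?_, fun h0 => absurd h0 (by omega), ?_⟩
        · have hb1 : ((vs[n]'(by omega)).1.val : ℕ) =
              ((vs[n+1]'(by omega)).1.val + 1) % (2*x) := hf1.1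
          have he : (((vs[n]'(by omega)).1.val : ℕ) : ZMod (2*x)) =
              (((vs[n+1]'(by omega)).1.val : ℕ) : ZMod (2*x)) + 1 := by
            rw [hb1, ZMod.natCast_mod]
            push_cast
            ring
          rw [he] at hcast
          push_cast
          linear_combination hcast
        · intro hf0 m hm
          rcases Nat.lt_or_ge m n with hmn | hmn
          · exact hff hf0 m hmn
          · have hmeq : m = n := by omega
            subst hmeq
            exact hf1
  obtain ⟨f, b, hfb, hcast, hbf, hff⟩ := hdisp ls.length le_rfl
  have hvx : ((vs[ls.length]'(by omega)).1.val : ℕ) = (i + x) % (2*x) := by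
    rw [hwL]; exact hw2
  have hz : ((((f:ℤ) - b) : ℤ) : ZMod (2*x)) = (((x : ℤ)) : ZMod (2*x)) := by
    have e : (((i + x : ℕ)) : ZMod (2*x)) = (i : ZMod (2*x)) + f - b := by
      rw [← ZMod.natCast_mod, ← hvx, hcast]
    push_cast at e ⊢
    linear_combination -e
  have hdvd : (((2*x : ℕ)):ℤ) ∣ ((x:ℤ) - ((f:ℤ) - b)) :=
    ((ZMod.intCast_eq_intCast_iff _ _ _).mp hz).dvd
  have hcases := dvd_cases (((2*x:ℕ)):ℤ) _ (by push_cast; omega) hdvd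
    (by push_cast; omega) (by push_cast; omega)
  have hfbx : f = x ∧ b = 0 := by
    rcases hcases with h0 | h0 | h0
    · push_cast at h0; omega
    · -- all-backward case: contradiction via parity of first label
      exfalso
      push_cast at h0
      have hf0 : f = 0 := by omega
      have hbx : b = x := by omega
      have hall := hff hf0
      have hstep0 := hall 0 (by omega)
      have hev := bwd_first_even hx hh hstep0 (by rw [hvs0])
      have hl0 := (hbound 0 (by omega)).1
      have h1 := hmono (ls.length - 1) 0 (by omega)
      simp only [Nat.zero_add] at h1
      have h3 := (hbound (ls.length - 1) (by omega)).2
      omega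
    · push_cast at h0; omega
  obtain ⟨hfx, hb0⟩ := hfbx
  have hallf := hbf hb0
  have hlab : ∀ m, (hm : m < ls.length) → ls[m]'hm = m + 1 := by
    intro m hm
    have low := hmono m 0 (by omega)
    simp only [Nat.zero_add] at low
    have l0 := (hbound 0 (by omega)).1
    have up := hmono (ls.length - 1 - m) m (by omega)
    have he : m + (ls.length - 1 - m) = ls.length - 1 := by omega
    simp only [he] at up
    have ub := (hbound (ls.length - 1) (by omega)).2
    omega
  have hnode : ∀ k, (hk : k ≤ ls.length) → vs[k]'(by omega) = pN x hx2 i j k := by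
    intro k
    induction k with
    | zero =>
      intro _
      rw [hvs0, pN_zero hx2 i j hi hj]
    | succ n ih =>
      intro hk
      have hfn := hallf n (by omega)
      rw [hlab n (by omega), ih (by omega)] at hfn
      exact dc_fwd_det hx hh hfn (pN_adj hx hh hx2 i j n (by omega))
  constructor
  · refine List.ext_getElem (by rw [pNodes_length]; omega) ?_
    intro m h1 h2
    rw [pNodes_getElem]
    exact hnode m (by omega)
  · refine List.ext_getElem (by simp [pLabels]; omega) ?_
    intro m h1 h2
    rw [pLabels_getElem]
    exact hlab m h1

set_option maxHeartbeats 2000000 in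
lemma q_unique (hx : x = 2*h) (hh : 0 < h) (hx2 : 2 ≤ x) (i j : ℕ) (hi : i < 2*x)
    (hj : j < x/2) {vs : List (DCNode x)} {ls : List ℕ}
    (hT : IsTempPath (DCAdj x) vs ls)
    (hhead : vs.head? = some (⟨i, hi⟩, ⟨j, hj⟩, false))
    (hlast : ∃ w : DCNode x, vs.getLast? = some w ∧ (w.1 : ℕ) = (i + x + 1) % (2*x)) :
    vs = qNodes x hx2 i j ∧ ls = qLabels x := by
  have hstrict := tp_strict hx hh hx2 hT
  obtain ⟨hnd, hlen, hch, hadj⟩ := hT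
  have hmono := strict_mono_ls hstrict
  have hvs0 : vs[0]'(by omega) = (⟨i, hi⟩, ⟨j, hj⟩, false) := by
    rw [List.head?_eq_getElem?, List.getElem?_eq_getElem (by omega)] at hhead
    exact Option.some.inj hhead
  obtain ⟨w, hw1, hw2⟩ := hlast
  have hwL : vs[ls.length]'(by omega) = w := by
    rw [List.getLast?_eq_getElem?, hlen, Nat.add_sub_cancel,
      List.getElem?_eq_getElem (by omega)] at hw1
    exact Option.some.inj hw1
  have hadj' : ∀ m, (hm : m < ls.length) →
      DCAdj x (vs[m]'(by omega)) (vs[m+1]'(by omega)) (ls[m]'hm) := by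
    intro m hm
    have := hadj m (by omega) hm
    simpa using this
  have hbound : ∀ m, (hm : m < ls.length) → 1 ≤ ls[m]'hm ∧ ls[m]'hm ≤ x := by
    intro m hm
    rcases hadj' m hm with hf | hf
    exacts [dc_label_bound hx hh hf, dc_label_bound hx hh hf]
  have hLx : ls.length ≤ x := by
    by_contra hc
    push_neg at hc
    have h1 := hmono (ls.length - 1) 0 (by omega)
    simp only [Nat.zero_add] at h1
    have h2 := (hbound 0 (by omega)).1
    have h3 := (hbound (ls.length - 1) (by omega)).2
    omega
  have hdisp : ∀ k, (hk : k ≤ ls.length) → ∃ f b : ℕ, f + b = k ∧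
      (((vs[k]'(by omega)).1.val : ℕ) : ZMod (2*x)) = (i : ZMod (2*x)) + f - b ∧
      (b = 0 → ∀ m, (hm : m < k) → dcForward x (vs[m]'(by omega)) (vs[m+1]'(by omega))
        (ls[m]'(by omega))) ∧
      (f = 0 → ∀ m, (hm : m < k) → dcForward x (vs[m+1]'(by omega)) (vs[m]'(by omega))
        (ls[m]'(by omega))) := by
    intro k
    induction k with
    | zero =>
      intro _
      refine ⟨0, 0, rfl, ?_, fun _ m hm => absurd hm (by omega),
        fun _ m hm => absurd hm (by omega)⟩
      rw [hvs0]
      push_cast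
      ring
    | succ n ih =>
      intro hk
      obtain ⟨f, b, hfb, hcast, hbf, hff⟩ := ih (by omega)
      rcases hadj' n (by omega) with hf1 | hf1
      · refine ⟨f+1, b, by omega, ?_, ?_, fun h0 => absurd h0 (by omega)⟩
        · have hb1 : ((vs[n+1]'(by omega)).1.val : ℕ) =
              ((vs[n]'(by omega)).1.val + 1) % (2*x) := hf1.1
          rw [hb1, ZMod.natCast_mod]
          push_cast
          linear_combination hcast
        · intro hb0 m hm
          rcases Nat.lt_or_ge m n with hmn | hmn
          · exact hbf hb0 m hmn
          · have hmeq : m = n := by omega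
            subst hmeq
            exact hf1
      · refine ⟨f, b+1, by omega, ?_, fun h0 => absurd h0 (by omega), ?_⟩
        · have hb1 : ((vs[n]'(by omega)).1.val : ℕ) =
              ((vs[n+1]'(by omega)).1.val + 1) % (2*x) := hf1.1
          have he : (((vs[n]'(by omega)).1.val : ℕ) : ZMod (2*x)) =
              (((vs[n+1]'(by omega)).1.val : ℕ) : ZMod (2*x)) + 1 := by
            rw [hb1, ZMod.natCast_mod]
            push_cast
            ring
          rw [he] at hcast
          push_cast
          linear_combination hcast
        · intro hf0 m hm
          rcases Nat.lt_or_ge m n with hmn | hmn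
          · exact hff hf0 m hmn
          · have hmeq : m = n := by omega
            subst hmeq
            exact hf1
  obtain ⟨f, b, hfb, hcast, hbf, hff⟩ := hdisp ls.length le_rfl
  have hvx : ((vs[ls.length]'(by omega)).1.val : ℕ) = (i + x + 1) % (2*x) := by
    rw [hwL]; exact hw2
  have hz : ((((f:ℤ) - b) : ℤ) : ZMod (2*x)) = (((x + 1 : ℤ)) : ZMod (2*x)) := by
    have e : (((i + x + 1 : ℕ)) : ZMod (2*x)) = (i : ZMod (2*x)) + f - b := by
      rw [← ZMod.natCast_mod, ← hvx, hcast]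
    push_cast at e ⊢
    linear_combination -e
  have hdvd : (((2*x : ℕ)):ℤ) ∣ (((x:ℤ) + 1) - ((f:ℤ) - b)) :=
    ((ZMod.intCast_eq_intCast_iff _ _ _).mp hz).dvd
  have hcases := dvd_cases (((2*x:ℕ)):ℤ) _ (by push_cast; omega) hdvd
    (by push_cast; omega) (by push_cast; omega)
  have hfbx : f = 0 ∧ b = x - 1 := by
    rcases hcases with h0 | h0 | h0
    · push_cast at h0; omega
    · push_cast at h0; omega
    · push_cast at h0; omega
  obtain ⟨hf0, hbx⟩ := hfbx
  have hLval : ls.length = x - 1 := by omega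
  have hallb := hff hf0
  have hstep0 : 0 < ls.length → 2 ≤ ls[0]'(by omega) := by
    intro hpos
    have hs := hallb 0 (by omega)
    have hev := bwd_first_even hx hh hs (by rw [hvs0])
    have hl0 := (hbound 0 (by omega)).1
    omega
  have hlab : ∀ m, (hm : m < ls.length) → ls[m]'hm = m + 2 := by
    intro m hm
    have low := hmono m 0 (by omega)
    simp only [Nat.zero_add] at low
    have l0 := hstep0 (by omega)
    have up := hmono (ls.length - 1 - m) m (by omega)
    have he : m + (ls.length - 1 - m) = ls.length - 1 := by omega
    simp only [he] at up
    have ub := (hbound (ls.length - 1) (by omega)).2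
    omega
  have hnode : ∀ k, (hk : k ≤ ls.length) → vs[k]'(by omega) = qN x hx2 i j k := by
    intro k
    induction k with
    | zero =>
      intro _
      rw [hvs0, qN_zero hx2 i j hi hj]
    | succ n ih =>
      intro hk
      have hfn := hallb n (by omega)
      rw [hlab n (by omega), ih (by omega)] at hfn
      exact dc_bwd_det hx hh hfn (qN_adj hx hh hx2 i j n (by omega))
  constructor
  · refine List.ext_getElem (by rw [qNodes_length]; omega) ?_
    intro m h1 h2
    rw [qNodes_getElem]
    exact hnode m (by omega)
  · refine List.ext_getElem (by simp [qLabels]; omega) ?_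
    intro m h1 h2
    rw [qLabels_getElem]
    exact hlab m h1


lemma pathEdges_mem (hx2 : 2 ≤ x) (i j : ℕ) {e : Sym2 (DCNode x)} :
    e ∈ pathEdges (pNodes x hx2 i j) ↔
      ∃ k, k < x ∧ e = s(pN x hx2 i j k, pN x hx2 i j (k+1)) := by
  simp only [pathEdges, Set.mem_setOf_eq]
  constructor
  · rintro ⟨k, hk, rfl⟩
    have hkx : k < x := by have := pNodes_length (x := x) hx2 i j; omega
    refine ⟨k, hkx, ?_⟩
    simp only [List.get_eq_getElem, pNodes_getElem]
  · rintro ⟨k, hk, rfl⟩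
    refine ⟨k, by rw [pNodes_length]; omega, ?_⟩
    simp only [List.get_eq_getElem, pNodes_getElem]

lemma pN_edge_eq (hx : x = 2*h) (hh : 0 < h) (hx2 : 2 ≤ x) {i j i' j' k k' : ℕ}
    (hi : i < 2*x) (hi' : i' < 2*x) (hj : j < x/2) (hj' : j' < x/2)
    (hk : k < x) (hk' : k' < x)
    (he : s(pN x hx2 i j k, pN x hx2 i j (k+1)) =
      s(pN x hx2 i' j' k', pN x hx2 i' j' (k'+1))) :
    i = i' ∧ j = j' := by
  have hd2 : x / 2 = h := by omega
  rw [Sym2.eq_iff] at he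
  rcases he with ⟨e1, e2⟩ | ⟨e1, e2⟩
  · have hpar : decide (k % 2 = 1) = decide (k' % 2 = 1) :=
      congrArg (fun v : DCNode x => v.2.2) e1
    have hparn : k % 2 = k' % 2 := by
      rcases Nat.mod_two_eq_zero_or_one k with h1 | h1 <;>
        rcases Nat.mod_two_eq_zero_or_one k' with h2 | h2 <;>
        simp [h1, h2] at hpar ⊢ <;> omega
    have i1 : (j + fP k) % (x/2) = (j' + fP k') % (x/2) :=
      congrArg (fun v : DCNode x => (v.2.1 : ℕ)) e1
    have i2 : (j + fP (k+1)) % (x/2) = (j' + fP (k'+1)) % (x/2) :=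
      congrArg (fun v : DCNode x => (v.2.1 : ℕ)) e2
    have hstep : fP (k+1) = fP k + k/2 := rfl
    have hstep' : fP (k'+1) = fP k' + k'/2 := rfl
    have m2 : (j + fP k + k/2) % (x/2) = (j' + fP k' + k'/2) % (x/2) := by
      have e3 : j + fP k + k/2 = j + fP (k+1) := by rw [hstep]; omega
      have e4 : j' + fP k' + k'/2 = j' + fP (k'+1) := by rw [hstep']; omega
      rw [e3, e4]; exact i2
    have hc : k/2 ≡ k'/2 [MOD x/2] := Nat.ModEq.add_left_cancel i1 m2
    have hk2 : k/2 = k'/2 := modeq_bounded (x/2) _ _ (by omega) (by omega) hc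
    have hkk : k = k' := by omega
    subst hkk
    have b1 : (i + k) % (2*x) = (i' + k) % (2*x) :=
      congrArg (fun v : DCNode x => (v.1 : ℕ)) e1
    have hii : i = i' := modeq_bounded (2*x) _ _ hi hi'
      (Nat.ModEq.add_right_cancel' k b1)
    subst hii
    refine ⟨rfl, modeq_bounded (x/2) _ _ hj hj'
      (Nat.ModEq.add_right_cancel' (fP k) i1)⟩
  · exfalso
    have b1 : (i + k) % (2*x) = (i' + (k'+1)) % (2*x) :=
      congrArg (fun v : DCNode x => (v.1 : ℕ)) e1
    have b2 : (i + (k+1)) % (2*x) = (i' + k') % (2*x) :=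
      congrArg (fun v : DCNode x => (v.1 : ℕ)) e2
    have m1 : i + k ≡ i' + k' + 1 [MOD 2*x] := b1
    have m2 : i + k + 1 ≡ i' + k' [MOD 2*x] := b2
    have m3 := m2.add_right 1
    have m4 := m3.trans m1.symm
    have hdvd : 2*x ∣ (i + k + 1 + 1) - (i + k) := (Nat.modEq_iff_dvd' (by omega)).mp m4.symm
    rw [show (i + k + 1 + 1) - (i + k) = 2 by omega] at hdvd
    have := Nat.le_of_dvd (by omega) hdvd
    omega

lemma dcEdges_covered (hx : x = 2*h) (hh : 0 < h) (hx2 : 2 ≤ x) {a b : DCNode x}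
    {l : ℕ} (hf : dcForward x a b l) :
    ∃ i' j' k, i' < 2*x ∧ j' < x/2 ∧ k < x ∧
      a = pN x hx2 i' j' k ∧ b = pN x hx2 i' j' (k+1) := by
  have hd2 : x / 2 = h := by omega
  obtain ⟨hf1, hf2, -⟩ := hf
  set m := (a.1 : ℕ) with hm
  set k := (a.2.1 : ℕ) with hk
  set k' := (b.2.1 : ℕ) with hk'
  have hmlt : m < 2*x := a.1.isLt
  have hklt : k < h := by have := a.2.1.isLt; omega
  have hk'lt : k' < h := by have := b.2.1.isLt; omega
  set d := (k' + h - k) % h with hd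
  have hdlt : d < h := Nat.mod_lt _ hh
  set idx := if a.2.2 then 2*d+1 else 2*d with hidx
  have hidxlt : idx < x := by
    rw [hidx]; split_ifs <;> omega
  have hidxd : idx / 2 = d := by
    rw [hidx]; split_ifs <;> omega
  set B := x*x*(x/2) with hB
  have hfPle : fP idx ≤ B := by
    calc fP idx ≤ idx * idx := fP_le idx
    _ ≤ x * x := Nat.mul_le_mul (by omega) (by omega)
    _ ≤ B := Nat.le_mul_of_pos_right _ (by omega)
  refine ⟨(m + 2*x - idx) % (2*x), (k + B - fP idx) % (x/2), idx,
    Nat.mod_lt _ (by omega), Nat.mod_lt _ (by omega), hidxlt, ?_, ?_⟩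
  · refine Prod.ext (Fin.ext ?_) (Prod.ext (Fin.ext ?_) ?_)
    · show m = ((m + 2*x - idx) % (2*x) + idx) % (2*x)
      rw [Nat.mod_add_mod, show m + 2*x - idx + idx = m + 2*x by omega,
        Nat.add_mod_right]
      exact (Nat.mod_eq_of_lt hmlt).symm
    · show k = ((k + B - fP idx) % (x/2) + fP idx) % (x/2)
      rw [Nat.mod_add_mod, show k + B - fP idx + fP idx = k + B by omega, hB,
        Nat.add_mul_mod_self_right]
      exact (Nat.mod_eq_of_lt (by omega)).symm
    · show a.2.2 = decide (idx % 2 = 1)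
      have hpar : idx % 2 = if a.2.2 then 1 else 0 := by
        rw [hidx]; split_ifs <;> omega
      cases hA : a.2.2 <;> rw [hA] at hpar <;> simp at hpar <;> simp [hpar]
  · refine Prod.ext (Fin.ext ?_) (Prod.ext (Fin.ext ?_) ?_)
    · show (b.1 : ℕ) = ((m + 2*x - idx) % (2*x) + (idx + 1)) % (2*x)
      rw [hf1, Nat.mod_add_mod, show m + 2*x - idx + (idx + 1) = m + 1 + 2*x by omega,
        Nat.add_mod_right]
    · show k' = ((k + B - fP idx) % (x/2) + fP (idx+1)) % (x/2)
      have hstep : fP (idx+1) = fP idx + idx/2 := rfl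
      rw [hstep, hidxd, Nat.mod_add_mod,
        show k + B - fP idx + (fP idx + d) = k + d + B by omega, hB,
        Nat.add_mul_mod_self_right, hd, hd2, Nat.add_mod_mod,
        show k + (k' + h - k) = k' + h by omega, Nat.add_mod_right]
      exact (Nat.mod_eq_of_lt hk'lt).symm
    · show b.2.2 = decide ((idx + 1) % 2 = 1)
      rw [hf2, parity_succ idx]
      have hpar : idx % 2 = if a.2.2 then 1 else 0 := by
        rw [hidx]; split_ifs <;> omega
      cases hA : a.2.2 <;> rw [hA] at hpar <;> simp at hpar <;> simp [hpar]

end DCAux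

/-- in the dense cycle graph for an even `x ≥ 2`, every odd node `v_{i,j}` has
exactly one temporal path `P i j` ending in the opposite bag `B_{(i+x) mod 2x}` and exactly
one temporal path `Q i j` ending in bag `B_{(i+x+1) mod 2x}`; `P i j` passes through the bags
`B_i, B_{i+1}, …, B_{(i+x) mod 2x}` consecutively, `Q i j` passes through the bags
`B_i, B_{i−1}, …, B_{(i+x+1) mod 2x}` consecutively, and the edge sets of the paths `P i j`
form a partition of the edge set of the graph. -/
theorem dense_cycle_paths (x : ℕ) (hx : Even x) (hx2 : 2 ≤ x) :
    ∃ P Q : Fin (2 * x) → Fin (x / 2) → List (DCNode x) × List ℕ,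
      (∀ i j,
        IsTempPath (DCAdj x) (P i j).1 (P i j).2 ∧
        (P i j).1.head? = some (i, j, false) ∧
        (∃ w : DCNode x, (P i j).1.getLast? = some w ∧ (w.1 : ℕ) = ((i : ℕ) + x) % (2 * x)) ∧
        (∀ (vs : List (DCNode x)) (ls : List ℕ),
          IsTempPath (DCAdj x) vs ls →
          vs.head? = some (i, j, false) →
          (∃ w : DCNode x, vs.getLast? = some w ∧ (w.1 : ℕ) = ((i : ℕ) + x) % (2 * x)) →
          vs = (P i j).1 ∧ ls = (P i j).2) ∧
        (P i j).1.length = x + 1 ∧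
        (∀ (idx : ℕ) (h : idx < (P i j).1.length),
          (((P i j).1.get ⟨idx, h⟩).1 : ℕ) = ((i : ℕ) + idx) % (2 * x))) ∧
      (∀ i j,
        IsTempPath (DCAdj x) (Q i j).1 (Q i j).2 ∧
        (Q i j).1.head? = some (i, j, false) ∧
        (∃ w : DCNode x, (Q i j).1.getLast? = some w ∧
          (w.1 : ℕ) = ((i : ℕ) + x + 1) % (2 * x)) ∧
        (∀ (vs : List (DCNode x)) (ls : List ℕ),
          IsTempPath (DCAdj x) vs ls →
          vs.head? = some (i, j, false) →
          (∃ w : DCNode x, vs.getLast? = some w ∧ (w.1 : ℕ) = ((i : ℕ) + x + 1) % (2 * x)) →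
          vs = (Q i j).1 ∧ ls = (Q i j).2) ∧
        (Q i j).1.length = x ∧
        (∀ (idx : ℕ) (h : idx < (Q i j).1.length),
          (((Q i j).1.get ⟨idx, h⟩).1 : ℕ) = ((i : ℕ) + (2 * x - idx)) % (2 * x))) ∧
      (∀ i j i' j', (i, j) ≠ (i', j') →
        Disjoint (pathEdges (P i j).1) (pathEdges (P i' j').1)) ∧
      (⋃ (i : Fin (2 * x)), ⋃ (j : Fin (x / 2)), pathEdges (P i j).1) = dcEdges x := by
  obtain ⟨h, hxh⟩ := hx
  have hx' : x = 2*h := by omega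
  have hh : 0 < h := by omega
  refine ⟨fun i j => (pNodes x hx2 (i:ℕ) (j:ℕ), pLabels x),
    fun i j => (qNodes x hx2 (i:ℕ) (j:ℕ), qLabels x), ?_, ?_, ?_, ?_⟩
  · intro i j
    refine ⟨pPath_tp hx' hh hx2 _ _, ?_, ?_, ?_, pNodes_length hx2 _ _, ?_⟩
    · show (pNodes x hx2 (i:ℕ) (j:ℕ)).head? = _
      rw [List.head?_eq_getElem?,
        List.getElem?_eq_getElem (by rw [pNodes_length]; omega),
        pNodes_getElem hx2 _ _ 0 (by rw [pNodes_length]; omega),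
        pN_zero hx2 (i:ℕ) (j:ℕ) i.isLt j.isLt]
    · refine ⟨pN x hx2 (i:ℕ) (j:ℕ) x, ?_, rfl⟩
      have hlen1 : (pNodes x hx2 (i:ℕ) (j:ℕ)).length - 1 = x := by
        rw [pNodes_length]; omega
      rw [List.getLast?_eq_getElem?, hlen1,
        List.getElem?_eq_getElem (by rw [pNodes_length]; omega),
        pNodes_getElem hx2 _ _ x (by rw [pNodes_length]; omega)]
    · intro vs ls hT hhead hlast
      exact p_unique hx' hh hx2 (i:ℕ) (j:ℕ) i.isLt j.isLt hT hhead hlast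
    · intro idx hidx
      simp only [List.get_eq_getElem, pNodes_getElem]
      rfl
  · intro i j
    refine ⟨qPath_tp hx' hh hx2 _ _, ?_, ?_, ?_, qNodes_length hx2 _ _, ?_⟩
    · show (qNodes x hx2 (i:ℕ) (j:ℕ)).head? = _
      rw [List.head?_eq_getElem?,
        List.getElem?_eq_getElem (by rw [qNodes_length]; omega),
        qNodes_getElem hx2 _ _ 0 (by rw [qNodes_length]; omega),
        qN_zero hx2 (i:ℕ) (j:ℕ) i.isLt j.isLt]
    · refine ⟨qN x hx2 (i:ℕ) (j:ℕ) (x-1), ?_, ?_⟩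
      · have hlen1 : (qNodes x hx2 (i:ℕ) (j:ℕ)).length - 1 = x - 1 := by
          rw [qNodes_length]
        rw [List.getLast?_eq_getElem?, hlen1,
          List.getElem?_eq_getElem (by rw [qNodes_length]; omega),
          qNodes_getElem hx2 _ _ (x-1) (by rw [qNodes_length]; omega)]
      · show ((i:ℕ) + (2*x - (x-1))) % (2*x) = ((i:ℕ) + x + 1) % (2*x)
        rw [show 2*x - (x-1) = x + 1 by omega, ← Nat.add_assoc]
    · intro vs ls hT hhead hlast
      exact q_unique hx' hh hx2 (i:ℕ) (j:ℕ) i.isLt j.isLt hT hhead hlast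
    · intro idx hidx
      simp only [List.get_eq_getElem, qNodes_getElem]
      rfl
  · intro i j i' j' hne
    rw [Set.disjoint_left]
    intro e he he'
    rw [pathEdges_mem] at he he'
    obtain ⟨k, hk, rfl⟩ := he
    obtain ⟨k', hk', heq⟩ := he'
    obtain ⟨hii, hjj⟩ := pN_edge_eq hx' hh hx2 i.isLt i'.isLt j.isLt j'.isLt hk hk' heq
    exact hne (Prod.ext (Fin.ext hii) (Fin.ext hjj))
  · ext e
    simp only [Set.mem_iUnion, dcEdges, Set.mem_setOf_eq]
    constructor
    · rintro ⟨i, j, he⟩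
      rw [pathEdges_mem] at he
      obtain ⟨k, hk, rfl⟩ := he
      exact ⟨pN x hx2 _ _ k, pN x hx2 _ _ (k+1), k+1, rfl, pN_adj hx' hh hx2 _ _ k hk⟩
    · rintro ⟨a, b, l, rfl, hf⟩
      obtain ⟨i', j', k, hi', hj', hk, ha, hb⟩ := dcEdges_covered hx' hh hx2 hf
      refine ⟨⟨i', hi'⟩, ⟨j', hj'⟩, ?_⟩
      rw [pathEdges_mem]
      exact ⟨k, hk, by rw [ha, hb]⟩

end DenseCycle

end TNCG
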